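/- Let x, y ∈ S²₁ with x ≠ y, and let H_x = {z ∈ H² : B(z,x) ≤ 0} and H_y = {z ∈ H² : B(z,y) ≤ 0} be the associated closed halfplanes. Then (H_x ⊆ H_y or H_y ⊆ H_x) if and only if B(x,y) ≥ 1. (This is the sign statement: two disjoint or asymptotic oriented lines satisfy B(x,y) = +cosh d, with d their distance, exactly when their orientations are compatible, i.e. one of the halfplanes is contained in the other.) -/
import Mathlib

/-- The Lorentz bilinear form on ℝ³: B(x,y) = −x⁰y⁰ + x¹y¹ + x²y². -/
noncomputable def lorentzB (x y : Fin 3 → ℝ) : ℝ :=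
  -(x 0 * y 0) + x 1 * y 1 + x 2 * y 2

/-- The hyperboloid model H² = {x : B(x,x) = −1, x⁰ > 0}. -/
def hyperboloid : Set (Fin 3 → ℝ) :=
  {x | lorentzB x x = -1 ∧ 0 < x 0}

/-- The de Sitter sphere S²₁ = {x : B(x,x) = 1}. -/
def deSitter : Set (Fin 3 → ℝ) :=
  {x | lorentzB x x = 1}

/-- The closed halfplane in H² associated to an oriented line x ∈ S²₁. -/
def halfplane (x : Fin 3 → ℝ) : Set (Fin 3 → ℝ) :=
  {z | z ∈ hyperboloid ∧ lorentzB z x ≤ 0}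

lemma lorentzB_comm (x y : Fin 3 → ℝ) : lorentzB x y = lorentzB y x := by
  simp only [lorentzB]; ring

/-- Two "future-pointing" causal vectors (one strictly timelike) pair negatively. -/
lemma lorentz_pair_neg (u v : Fin 3 → ℝ) (hu : lorentzB u u < 0) (hu0 : 0 < u 0)
    (hv : lorentzB v v ≤ 0) (hv0 : 0 < v 0) : lorentzB u v < 0 := by
  simp only [lorentzB] at *
  have h3 : (u 1 * v 1 + u 2 * v 2)^2 ≤ (u 1^2 + u 2^2) * (v 1^2 + v 2^2) := by
    nlinarith [sq_nonneg (u 1 * v 2 - u 2 * v 1)]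
  have ha : (0:ℝ) ≤ u 1^2 + u 2^2 := by positivity
  have haA : u 1^2 + u 2^2 < u 0^2 := by nlinarith
  have hbB : v 1^2 + v 2^2 ≤ v 0^2 := by nlinarith
  have h4 : (u 1^2 + u 2^2) * (v 1^2 + v 2^2) < u 0^2 * v 0^2 :=
    lt_of_le_of_lt (mul_le_mul_of_nonneg_left hbB ha)
      (mul_lt_mul_of_pos_right haA (by positivity))
  nlinarith [mul_pos hu0 hv0, h3, h4]

/-- A normalized timelike vector pairing negatively with a future causal vector is future. -/
lemma lorentz_future (z v : Fin 3 → ℝ) (hz : lorentzB z z = -1)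
    (hv : lorentzB v v ≤ 0) (hv0 : 0 < v 0) (hzv : lorentzB z v < 0) : 0 < z 0 := by
  by_contra h
  push_neg at h
  simp only [lorentzB] at *
  have h3 : (z 1 * v 1 + z 2 * v 2)^2 ≤ (z 1^2 + z 2^2) * (v 1^2 + v 2^2) := by
    nlinarith [sq_nonneg (z 1 * v 2 - z 2 * v 1)]
  have ha : (0:ℝ) ≤ z 1^2 + z 2^2 := by positivity
  have haA : z 1^2 + z 2^2 < z 0^2 := by nlinarith
  have hbB : v 1^2 + v 2^2 ≤ v 0^2 := by nlinarith
  have h4 : (z 1^2 + z 2^2) * (v 1^2 + v 2^2) < z 0^2 * v 0^2 :=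
    lt_of_le_of_lt (mul_le_mul_of_nonneg_left hbB ha)
      (mul_lt_mul_of_pos_right haA (by positivity))
  have h5 : z 1 * v 1 + z 2 * v 2 < z 0 * v 0 := by linarith
  have h6 : 0 ≤ (-(z 0)) * v 0 := mul_nonneg (neg_nonneg.mpr h) hv0.le
  nlinarith [h3, h4, h5, h6]

/-- Every oriented line has a point of H² strictly inside its halfplane (pairing −1). -/
lemma exists_interior (x : Fin 3 → ℝ) (hx : lorentzB x x = 1) :
    ∃ z : Fin 3 → ℝ, lorentzB z z = -1 ∧ 0 < z 0 ∧ lorentzB z x = -1 := by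
  simp only [lorentzB] at hx
  set r := Real.sqrt (1 + x 0 ^ 2) with hrdef
  have hr2 : r ^ 2 = 1 + x 0 ^ 2 := Real.sq_sqrt (by positivity)
  have hrpos : 0 < r := Real.sqrt_pos.mpr (by positivity)
  set s := Real.sqrt 2 with hsdef
  have hs2 : s ^ 2 = 2 := Real.sq_sqrt (by norm_num)
  have hspos : 0 < s := Real.sqrt_pos.mpr (by norm_num)
  have hx12 : x 1 ^ 2 + x 2 ^ 2 = r ^ 2 := by rw [hr2]; nlinarith
  refine ⟨![s * r - x 0, s * (x 0 * x 1 / r) - x 1, s * (x 0 * x 2 / r) - x 2], ?_, ?_, ?_⟩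
  · simp only [lorentzB, Matrix.cons_val_zero, Matrix.cons_val_one, Matrix.head_cons,
      Matrix.cons_val_two, Matrix.tail_cons]
    field_simp
    linear_combination (s * x 0 - r)^2 * hx12 - r^2 * (r^2 - x 0^2) * hs2 - r^2 * hr2
  · simp only [Matrix.cons_val_zero]
    have hsr : (s * r)^2 = 2 * (1 + x 0 ^ 2) := by rw [mul_pow, hs2, hr2]
    nlinarith [hsr, sq_nonneg (x 0), mul_pos hspos hrpos]
  · simp only [lorentzB, Matrix.cons_val_zero, Matrix.cons_val_one, Matrix.head_cons,
      Matrix.cons_val_two, Matrix.tail_cons]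
    field_simp
    linear_combination (s * x 0 - r) * hx12 - r * hr2

/-- If two lines cross (|B(x,y)| < 1), there is a point on the line of x strictly
outside the halfplane of y. -/
lemma exists_cross (x y : Fin 3 → ℝ) (hx : lorentzB x x = 1) (hy : lorentzB y y = 1)
    (hb1 : -1 < lorentzB x y) (hb2 : lorentzB x y < 1) :
    ∃ z : Fin 3 → ℝ, lorentzB z z = -1 ∧ 0 < z 0 ∧ lorentzB z x = 0 ∧
      lorentzB z y = 1 - lorentzB x y ^ 2 := by
  set b := lorentzB x y with hbdef
  have hd : 0 < 1 - b ^ 2 := by nlinarith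
  set P : Fin 3 → ℝ := ![-(x 1 * y 2 - x 2 * y 1), x 2 * y 0 - x 0 * y 2, x 0 * y 1 - x 1 * y 0]
    with hPdef
  have hPP : lorentzB P P = b ^ 2 - 1 := by
    have : lorentzB P P = lorentzB x y ^ 2 - lorentzB x x * lorentzB y y := by
      simp only [lorentzB, hPdef, Matrix.cons_val_zero, Matrix.cons_val_one, Matrix.head_cons,
        Matrix.cons_val_two, Matrix.tail_cons]
      ring
    rw [this, hx, hy]; ring
  have hPx : lorentzB P x = 0 := by
    simp only [lorentzB, hPdef, Matrix.cons_val_zero, Matrix.cons_val_one, Matrix.head_cons,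
      Matrix.cons_val_two, Matrix.tail_cons]
    ring
  have hPy : lorentzB P y = 0 := by
    simp only [lorentzB, hPdef, Matrix.cons_val_zero, Matrix.cons_val_one, Matrix.head_cons,
      Matrix.cons_val_two, Matrix.tail_cons]
    ring
  have hP0 : P 0 ≠ 0 := by
    intro h0
    have := hPP
    simp only [lorentzB, h0] at this
    nlinarith [sq_nonneg (P 1), sq_nonneg (P 2)]
  obtain ⟨Q, hQQ, hQ0, hQx, hQy⟩ :
      ∃ Q : Fin 3 → ℝ, lorentzB Q Q = b ^ 2 - 1 ∧ 0 < Q 0 ∧ lorentzB Q x = 0 ∧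
        lorentzB Q y = 0 := by
    rcases hP0.lt_or_gt with h | h
    · refine ⟨fun i => -P i, ?_, by simpa using h, ?_, ?_⟩
      · simp only [lorentzB] at hPP ⊢; linarith [hPP]
      · simp only [lorentzB] at hPx ⊢; linarith [hPx]
      · simp only [lorentzB] at hPy ⊢; linarith [hPy]
    · exact ⟨P, hPP, h, hPx, hPy⟩
  set α := Real.sqrt ((2 - b ^ 2) / (1 - b ^ 2)) with hαdef
  have hα2 : α ^ 2 = (2 - b ^ 2) / (1 - b ^ 2) :=
    Real.sq_sqrt (div_nonneg (by nlinarith) (by nlinarith))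
  have hαpos : 0 < α := Real.sqrt_pos.mpr (div_pos (by nlinarith) hd)
  obtain ⟨z, hzdef⟩ : ∃ z : Fin 3 → ℝ, z = fun i => α * Q i + (y i - b * x i) := ⟨_, rfl⟩
  have hzz : lorentzB z z = -1 := by
    have e1 : lorentzB z z
        = α ^ 2 * lorentzB Q Q + 2 * α * (lorentzB Q y - b * lorentzB Q x)
          + (lorentzB y y - 2 * b * lorentzB x y + b ^ 2 * lorentzB x x) := by
      rw [hzdef]; simp only [lorentzB]; ring
    rw [e1, hQQ, hQx, hQy, hx, hy, ← hbdef, hα2]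
    field_simp
    ring
  have hzQ : lorentzB z Q < 0 := by
    have e2 : lorentzB z Q = α * lorentzB Q Q + (lorentzB y Q - b * lorentzB x Q) := by
      rw [hzdef]; simp only [lorentzB]; ring
    rw [e2, hQQ, lorentzB_comm y Q, lorentzB_comm x Q, hQx, hQy]
    nlinarith
  have hz0 : 0 < z 0 := lorentz_future z Q hzz (by rw [hQQ]; nlinarith) hQ0 hzQ
  have hzx : lorentzB z x = 0 := by
    have e3 : lorentzB z x = α * lorentzB Q x + (lorentzB y x - b * lorentzB x x) := by
      rw [hzdef]; simp only [lorentzB]; ring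
    rw [e3, hQx, lorentzB_comm y x, ← hbdef, hx]; ring
  have hzy : lorentzB z y = 1 - b ^ 2 := by
    have e4 : lorentzB z y = α * lorentzB Q y + (lorentzB y y - b * lorentzB x y) := by
      rw [hzdef]; simp only [lorentzB]; ring
    rw [e4, hQy, hy, ← hbdef]; ring
  exact ⟨z, hzz, hz0, hzx, hzy⟩

set_option maxHeartbeats 1600000 in
theorem halfplane_nested_iff_compatible_orientations
    (x y : Fin 3 → ℝ) (hx : x ∈ deSitter) (hy : y ∈ deSitter) (hxy : x ≠ y) :
    (halfplane x ⊆ halfplane y ∨ halfplane y ⊆ halfplane x) ↔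
      1 ≤ lorentzB x y := by
  have hx' : lorentzB x x = 1 := hx
  have hy' : lorentzB y y = 1 := hy
  set b := lorentzB x y with hbdef
  constructor
  · -- nested → 1 ≤ b
    intro h
    by_contra hb
    push_neg at hb
    have key : (∃ z : Fin 3 → ℝ, (lorentzB z z = -1 ∧ 0 < z 0) ∧ lorentzB z x ≤ 0 ∧
          0 < lorentzB z y) ∧
        (∃ z : Fin 3 → ℝ, (lorentzB z z = -1 ∧ 0 < z 0) ∧ lorentzB z y ≤ 0 ∧
          0 < lorentzB z x) := by
      by_cases hbm : -1 < b
      · -- crossing lines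
        obtain ⟨z1, hz1, hz10, hz1x, hz1y⟩ := exists_cross x y hx' hy' hbm hb
        obtain ⟨z2, hz2, hz20, hz2y, hz2x⟩ := exists_cross y x hy' hx'
          (by rw [lorentzB_comm y x, ← hbdef]; exact hbm)
          (by rw [lorentzB_comm y x, ← hbdef]; exact hb)
        rw [lorentzB_comm y x, ← hbdef] at hz2x
        refine ⟨⟨z1, ⟨hz1, hz10⟩, le_of_eq hz1x, ?_⟩, ⟨z2, ⟨hz2, hz20⟩, le_of_eq hz2y, ?_⟩⟩
        · rw [hz1y, ← hbdef]; nlinarith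
        · rw [hz2x]; nlinarith
      · push_neg at hbm
        -- b ≤ -1
        have hbneg : b < 0 := by linarith
        by_cases hveq : ∀ i : Fin 3, y i - b * x i = 0
        · -- y = -x
          have hbsq : b ^ 2 = 1 := by
            have h0 : y 0 = b * x 0 := by linarith [hveq 0]
            have h1 : y 1 = b * x 1 := by linarith [hveq 1]
            have h2 : y 2 = b * x 2 := by linarith [hveq 2]
            have e : lorentzB y y = b ^ 2 * lorentzB x x := by
              simp only [lorentzB]; rw [h0, h1, h2]; ring
            rw [hy', hx'] at e; linarith
          have hbone : b = -1 := by nlinarith [sq_nonneg (b + 1)]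
          have hyx : ∀ i : Fin 3, y i = -x i := by
            intro i; have := hveq i; rw [hbone] at this; linarith
          obtain ⟨zx, hzx1, hzx0, hzxx⟩ := exists_interior x hx'
          obtain ⟨zy, hzy1, hzy0, hzyy⟩ := exists_interior y hy'
          have e1 : lorentzB zx y = -lorentzB zx x := by
            simp only [lorentzB]; rw [hyx 0, hyx 1, hyx 2]; ring
          have e2 : lorentzB zy x = -lorentzB zy y := by
            simp only [lorentzB]
            have x0 : x 0 = -y 0 := by rw [hyx 0]; ring
            have x1 : x 1 = -y 1 := by rw [hyx 1]; ring
            have x2 : x 2 = -y 2 := by rw [hyx 2]; ring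
            rw [x0, x1, x2]; ring
          exact ⟨⟨zx, ⟨hzx1, hzx0⟩, by rw [hzxx]; norm_num, by rw [e1, hzxx]; norm_num⟩,
            ⟨zy, ⟨hzy1, hzy0⟩, by rw [hzyy]; norm_num, by rw [e2, hzyy]; norm_num⟩⟩
        · push_neg at hveq
          obtain ⟨j, hj⟩ := hveq
          obtain ⟨v, hvdef⟩ : ∃ v : Fin 3 → ℝ, v = fun i => y i - b * x i := ⟨_, rfl⟩
          have hvj : v j ≠ 0 := by rw [hvdef]; exact hj
          have hvv : lorentzB v v = 1 - b ^ 2 := by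
            have e : lorentzB v v
                = lorentzB y y - 2 * b * lorentzB x y + b ^ 2 * lorentzB x x := by
              rw [hvdef]; simp only [lorentzB]; ring
            rw [e, hx', hy', ← hbdef]; ring
          have hvvle : lorentzB v v ≤ 0 := by rw [hvv]; nlinarith
          have hv0 : v 0 ≠ 0 := by
            intro h0
            have : v 1 = 0 ∧ v 2 = 0 := by
              simp only [lorentzB, h0] at hvvle
              constructor <;> nlinarith [sq_nonneg (v 1), sq_nonneg (v 2), hvvle,
                sq_nonneg (b + 1)]
            apply hvj
            fin_cases j
            · exact h0
            · exact this.1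
            · exact this.2
          obtain ⟨zx, hzx1, hzx0, hzxx⟩ := exists_interior x hx'
          obtain ⟨zy, hzy1, hzy0, hzyy⟩ := exists_interior y hy'
          obtain ⟨zX, hzX1, hzX0, hzXx'⟩ := exists_interior (fun i => -x i)
            (by simp only [lorentzB] at hx' ⊢; linarith)
          obtain ⟨zY, hzY1, hzY0, hzYy'⟩ := exists_interior (fun i => -y i)
            (by simp only [lorentzB] at hy' ⊢; linarith)
          have hzXx : lorentzB zX x = 1 := by
            simp only [lorentzB] at hzXx' ⊢; linarith
          have hzYy : lorentzB zY y = 1 := by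
            simp only [lorentzB] at hzYy' ⊢; linarith
          rcases hv0.lt_or_gt with hneg | hpos
          · -- v 0 < 0 : for all z ∈ H², b·B(z,x) < B(z,y)
            have key1 : ∀ z : Fin 3 → ℝ, lorentzB z z = -1 → 0 < z 0 →
                b * lorentzB z x < lorentzB z y := by
              intro z hz hz0
              have hnegpair : lorentzB z (fun i => -(v i)) < 0 := by
                apply lorentz_pair_neg z _ (by rw [hz]; norm_num) hz0
                · show lorentzB (fun i => -(v i)) (fun i => -(v i)) ≤ 0
                  have : lorentzB (fun i => -(v i)) (fun i => -(v i)) = lorentzB v v := by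
                    simp only [lorentzB]; ring
                  rw [this]; exact hvvle
                · show (0:ℝ) < -(v 0); linarith
              have e : lorentzB z (fun i => -(v i)) = b * lorentzB z x - lorentzB z y := by
                rw [hvdef]; simp only [lorentzB]; ring
              linarith [e ▸ hnegpair]
            refine ⟨⟨zx, ⟨hzx1, hzx0⟩, by rw [hzxx]; norm_num, ?_⟩,
              ⟨zy, ⟨hzy1, hzy0⟩, by rw [hzyy]; norm_num, ?_⟩⟩
            · have := key1 zx hzx1 hzx0
              rw [hzxx] at this
              nlinarith
            · have := key1 zy hzy1 hzy0
              rw [hzyy] at this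
              nlinarith
          · -- v 0 > 0 : for all z ∈ H², B(z,y) < b·B(z,x)
            have key2 : ∀ z : Fin 3 → ℝ, lorentzB z z = -1 → 0 < z 0 →
                lorentzB z y < b * lorentzB z x := by
              intro z hz hz0
              have hpair : lorentzB z v < 0 :=
                lorentz_pair_neg z v (by rw [hz]; norm_num) hz0 hvvle hpos
              have e : lorentzB z v = lorentzB z y - b * lorentzB z x := by
                rw [hvdef]; simp only [lorentzB]; ring
              linarith [e ▸ hpair]
            refine ⟨⟨zY, ⟨hzY1, hzY0⟩, ?_, by rw [hzYy]; norm_num⟩,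
              ⟨zX, ⟨hzX1, hzX0⟩, ?_, by rw [hzXx]; norm_num⟩⟩
            · have := key2 zY hzY1 hzY0
              rw [hzYy] at this
              nlinarith
            · have := key2 zX hzX1 hzX0
              rw [hzXx] at this
              nlinarith
    obtain ⟨⟨z1, hz1m, hz1x, hz1y⟩, ⟨z2, hz2m, hz2y, hz2x⟩⟩ := key
    rcases h with h | h
    · have : z1 ∈ halfplane y := h ⟨hz1m, hz1x⟩
      have : lorentzB z1 y ≤ 0 := this.2
      linarith
    · have : z2 ∈ halfplane x := h ⟨hz2m, hz2y⟩
      have : lorentzB z2 x ≤ 0 := this.2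
      linarith
  · -- 1 ≤ b → nested
    intro h
    obtain ⟨v, hvdef⟩ : ∃ v : Fin 3 → ℝ, v = fun i => y i - b * x i := ⟨_, rfl⟩
    have hvv : lorentzB v v = 1 - b ^ 2 := by
      have e : lorentzB v v
          = lorentzB y y - 2 * b * lorentzB x y + b ^ 2 * lorentzB x x := by
        rw [hvdef]; simp only [lorentzB]; ring
      rw [e, hx', hy', ← hbdef]; ring
    have hvvle : lorentzB v v ≤ 0 := by rw [hvv]; nlinarith
    have hvne : ∃ i, v i ≠ 0 := by
      by_contra hc
      push_neg at hc
      have hball : ∀ i : Fin 3, y i = b * x i := by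
        intro i; have := hc i; rw [hvdef] at this; simp only at this; linarith
      have hbsq : b ^ 2 = 1 := by
        have e : lorentzB y y = b ^ 2 * lorentzB x x := by
          simp only [lorentzB]; rw [hball 0, hball 1, hball 2]; ring
        rw [hy', hx'] at e; linarith
      have hbone : b = 1 := by nlinarith [sq_nonneg (b - 1)]
      apply hxy
      funext i
      have := hball i
      rw [hbone] at this
      linarith
    have hv0 : v 0 ≠ 0 := by
      intro h0
      obtain ⟨j, hj⟩ := hvne
      have hv12 : v 1 = 0 ∧ v 2 = 0 := by
        simp only [lorentzB, h0] at hvvle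
        constructor <;> nlinarith [sq_nonneg (v 1), sq_nonneg (v 2)]
      apply hj
      fin_cases j
      · exact h0
      · exact hv12.1
      · exact hv12.2
    rcases hv0.lt_or_gt with hneg | hpos
    · -- v 0 < 0 : halfplane y ⊆ halfplane x
      right
      obtain ⟨w, hwdef⟩ : ∃ w : Fin 3 → ℝ, w = fun i => x i - b * y i := ⟨_, rfl⟩
      have hww : lorentzB w w = 1 - b ^ 2 := by
        have e : lorentzB w w
            = lorentzB x x - 2 * b * lorentzB x y + b ^ 2 * lorentzB y y := by
          rw [hwdef]; simp only [lorentzB]; ring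
        rw [e, hx', hy', ← hbdef]; ring
      have hwwle : lorentzB w w ≤ 0 := by rw [hww]; nlinarith
      have hw0 : 0 < w 0 := by
        by_cases hbone : b = 1
        · have : w 0 = -(v 0) := by
            rw [hwdef, hvdef]; simp only; rw [hbone]; ring
          rw [this]; linarith
        · have hbgt : 1 < b := lt_of_le_of_ne h (Ne.symm hbone)
          have hwwlt : lorentzB w w < 0 := by rw [hww]; nlinarith
          have hw0ne : w 0 ≠ 0 := by
            intro h0
            simp only [lorentzB, h0] at hwwlt
            nlinarith [sq_nonneg (w 1), sq_nonneg (w 2)]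
          rcases hw0ne.lt_or_gt with hwneg | hwpos
          · exfalso
            have hvw : lorentzB v w = b ^ 3 - b := by
              have e : lorentzB v w = (1 + b ^ 2) * lorentzB x y - b * lorentzB y y
                  - b * lorentzB x x := by
                rw [hvdef, hwdef]; simp only [lorentzB]; ring
              rw [e, hx', hy', ← hbdef]; ring
            have hpair : lorentzB (fun i => -(v i)) (fun i => -(w i)) < 0 := by
              apply lorentz_pair_neg
              · show lorentzB (fun i => -(v i)) (fun i => -(v i)) < 0
                have : lorentzB (fun i => -(v i)) (fun i => -(v i)) = lorentzB v v := by
                  simp only [lorentzB]; ring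
                rw [this, hvv]; nlinarith
              · show (0:ℝ) < -(v 0); linarith
              · show lorentzB (fun i => -(w i)) (fun i => -(w i)) ≤ 0
                have : lorentzB (fun i => -(w i)) (fun i => -(w i)) = lorentzB w w := by
                  simp only [lorentzB]; ring
                rw [this]; exact hwwle
              · show (0:ℝ) < -(w 0); linarith
            have e2 : lorentzB (fun i => -(v i)) (fun i => -(w i)) = lorentzB v w := by
              simp only [lorentzB]; ring
            rw [e2, hvw] at hpair
            nlinarith
          · exact hwpos
      intro z hz
      obtain ⟨⟨hz1, hz2⟩, hz3⟩ := hz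
      refine ⟨⟨hz1, hz2⟩, ?_⟩
      have hpair : lorentzB z w < 0 :=
        lorentz_pair_neg z w (by rw [hz1]; norm_num) hz2 hwwle hw0
      have e : lorentzB z w = lorentzB z x - b * lorentzB z y := by
        rw [hwdef]; simp only [lorentzB]; ring
      have hb0 : 0 ≤ b := by linarith
      nlinarith [e ▸ hpair, mul_nonneg hb0 (neg_nonneg.mpr hz3)]
    · -- v 0 > 0 : halfplane x ⊆ halfplane y
      left
      intro z hz
      obtain ⟨⟨hz1, hz2⟩, hz3⟩ := hz
      refine ⟨⟨hz1, hz2⟩, ?_⟩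
      have hpair : lorentzB z v < 0 :=
        lorentz_pair_neg z v (by rw [hz1]; norm_num) hz2 hvvle hpos
      have e : lorentzB z v = lorentzB z y - b * lorentzB z x := by
        rw [hvdef]; simp only [lorentzB]; ring
      have hb0 : 0 ≤ b := by linarith
      nlinarith [e ▸ hpair, mul_nonneg hb0 (neg_nonneg.mpr hz3)]
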